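/- If a column C over C_n contains some letter m ≤ n (or m̄) with N(m) > m, then C contains a pair (z, z̄) of letters with N(z) > z. -/

import Mathlib

/-! Letters of `C_n = {1 < ... < n < n̄ < ... < 1̄}` are encoded as natural
numbers in `[1, 2n]`: the unbarred letter `m` is `m` and the barred letter
`m̄` is `2n+1-m`. -/

/-- A column over `C_n`: a strictly increasing list of letters of `C_n`. -/
def IsColumn (n : ℕ) (C : List ℕ) : Prop :=
  C.Chain' (· < ·) ∧ ∀ x ∈ C, 1 ≤ x ∧ x ≤ 2*n

/-- `N(m)`: the number of entries `x` of `C` with `x ≤ m` or `x ≥ m̄`. -/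
def Ncount (n m : ℕ) (C : List ℕ) : ℕ :=
  (C.filter (fun x => decide (x ≤ m ∨ 2*n+1-m ≤ x))).length

/-- KN-admissibility via the counting condition `N(m) ≤ m` for all `m ≤ n`. -/
def KNAdmissible (n : ℕ) (C : List ℕ) : Prop :=
  ∀ m, 1 ≤ m → m ≤ n → Ncount n m C ≤ m

/-- KN-coadmissibility: for each pair `(z, z̄)` occurring in the column,
the number of entries `x` with `z ≤ x ≤ z̄` is at most `n - z + 1`. -/
def Coadmissible (n : ℕ) (C : List ℕ) : Prop :=
  ∀ z, 1 ≤ z → z ≤ n → z ∈ C → (2*n+1-z) ∈ C →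
    (C.filter (fun x => decide (z ≤ x ∧ x ≤ 2*n+1-z))).length ≤ n - z + 1

/-- The set `I = {z_1 > z_2 > ...}` of unbarred letters `z` such that both
`z` and `z̄` occur in `C`, listed in decreasing order. -/
def dupList (n : ℕ) (C : List ℕ) : List ℕ :=
  ((List.range (n+1)).filter (fun z => decide (1 ≤ z ∧ z ∈ C ∧ (2*n+1-z) ∈ C))).reverse

/-- `t` is an unbarred letter `< bound` such that neither `t` nor `t̄` occurs in `C`. -/
def FreeLt (n : ℕ) (C : List ℕ) (bound t : ℕ) : Prop :=
  1 ≤ t ∧ t < bound ∧ t ∉ C ∧ (2*n+1-t) ∉ C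

/-- `J = {t_1 > ... > t_r}` is the splitting set of `C`: `t_1` is the greatest
letter `< z_1` free in `C`, and `t_i` is the greatest letter `< min(t_{i-1}, z_i)`
free in `C`. -/
def IsSplittingSet (n : ℕ) (C J : List ℕ) : Prop :=
  J.length = (dupList n C).length ∧
  ∀ i < J.length,
    FreeLt n C (if i = 0 then (dupList n C).getD 0 0
                else min (J.getD (i-1) 0) ((dupList n C).getD i 0)) (J.getD i 0) ∧
    ∀ s, FreeLt n C (if i = 0 then (dupList n C).getD 0 0
                else min (J.getD (i-1) 0) ((dupList n C).getD i 0)) s → s ≤ J.getD i 0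

/-- `C` can be split. -/
def CanSplit (n : ℕ) (C : List ℕ) : Prop := ∃ J, IsSplittingSet n C J

/-- `lC`: replace each duplicated unbarred letter `z_i` by `t_i` and reorder. -/
def lCol (n : ℕ) (C I J : List ℕ) : List ℕ :=
  List.insertionSort (· ≤ ·)
    (C.map fun x => if x ∈ I ∧ x ≤ n then J.getD (I.idxOf x) x else x)

/-- `rC`: replace each duplicated barred letter `z̄_i` by `t̄_i` and reorder. -/
def rCol (n : ℕ) (C I J : List ℕ) : List ℕ :=
  List.insertionSort (· ≤ ·)
    (C.map fun x => if (2*n+1-x) ∈ I ∧ n < x then 2*n+1 - J.getD (I.idxOf (2*n+1-x)) (2*n+1-x) else x)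

/-- `C*`: the column made of the unbarred letters of `lC` followed by the
barred letters of `rC`. -/
def starCol (n : ℕ) (C I J : List ℕ) : List ℕ :=
  (lCol n C I J).filter (fun x => decide (x ≤ n)) ++
  (rCol n C I J).filter (fun x => decide (n < x))

open Classical in
noncomputable def theSplit (n : ℕ) (C : List ℕ) : List ℕ :=
  if h : CanSplit n C then h.choose else []

noncomputable def lC (n : ℕ) (C : List ℕ) : List ℕ := lCol n C (dupList n C) (theSplit n C)
noncomputable def rC (n : ℕ) (C : List ℕ) : List ℕ := rCol n C (dupList n C) (theSplit n C)

/-- The map `Φ : C ↦ C*` from admissible to coadmissible columns. -/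
noncomputable def PhiMap (n : ℕ) (C : List ℕ) : List ℕ :=
  starCol n C (dupList n C) (theSplit n C)

/-- `w` is a non-admissible column word all of whose strict factors are admissible. -/
def MinimalNonAdm (n : ℕ) (w : List ℕ) : Prop :=
  IsColumn n w ∧ ¬ KNAdmissible n w ∧
  ∀ u, u <:+: w → u.length < w.length → KNAdmissible n u

/-- The lowest unbarred letter `z` with `(z, z̄)` in `w` and `N(z) = z + 1`. -/
def badLetter (n : ℕ) (w : List ℕ) : ℕ :=
  (((List.range (n+1)).filter (fun z =>
      decide (1 ≤ z ∧ z ∈ w ∧ (2*n+1-z) ∈ w ∧ Ncount n z w = z+1)))).headD 0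

/-- `w̃`: the word obtained from `w` by erasing the pair `(z, z̄)`, `z = badLetter`. -/
def contract (n : ℕ) (w : List ℕ) : List ℕ :=
  w.filter (fun x => decide (x ≠ badLetter n w ∧ x ≠ 2*n+1 - badLetter n w))

/-! ### Crystal operators via the signature rule. -/

/-- The `i`-signature of `w`: `+` (true) for letters `i`, `(i+1)bar`; `−` (false)
for letters `i+1`, `ī`; each with its position in `w`. -/
def sigList (n i : ℕ) (w : List ℕ) : List (Bool × ℕ) :=
  (w.zipIdx.map Prod.swap).filterMap (fun p =>
    if p.2 = i ∨ p.2 = 2*n - i then some (true, p.1)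
    else if p.2 = i+1 ∨ p.2 = 2*n+1-i then some (false, p.1)
    else none)

/-- One step of the `+−` cancellation, using a stack. -/
def reduceStep (st : List (Bool × ℕ)) (it : Bool × ℕ) : List (Bool × ℕ) :=
  match st, it with
  | (true, _) :: rest, (false, _) => rest
  | _, _ => it :: st

/-- The reduced signature `ρ_i(w) = −^r +^s` (with positions). -/
def reducedSig (l : List (Bool × ℕ)) : List (Bool × ℕ) := (l.foldl reduceStep []).reverse

/-- Kashiwara operator `f̃_i` on words (`none` encodes `0`). -/
def fOp (n i : ℕ) (w : List ℕ) : Option (List ℕ) :=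
  match (reducedSig (sigList n i w)).find? (fun s => s.1) with
  | some s => some (w.set s.2 (if w.getD s.2 0 = i then i+1 else 2*n+1-i))
  | none => none

/-- Kashiwara operator `ẽ_i` on words (`none` encodes `0`). -/
def eOp (n i : ℕ) (w : List ℕ) : Option (List ℕ) :=
  match ((reducedSig (sigList n i w)).reverse.find? (fun s => !s.1)) with
  | some s => some (w.set s.2 (if w.getD s.2 0 = i+1 then i else 2*n - i))
  | none => none

/-- `ε_i(w)`. -/
def epsC (n i : ℕ) (w : List ℕ) : ℕ :=
  ((reducedSig (sigList n i w)).filter (fun s => !s.1)).length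

/-- `φ_i(w)`. -/
def phiC (n i : ℕ) (w : List ℕ) : ℕ :=
  ((reducedSig (sigList n i w)).filter (fun s => s.1)).length

/-- One crystal edge of some color `i ∈ {1,...,n}` (in either direction). -/
def CrystalStep (n : ℕ) (w w' : List ℕ) : Prop :=
  ∃ i, 1 ≤ i ∧ i ≤ n ∧ (fOp n i w = some w' ∨ eOp n i w = some w')

/-- Same connected component of the crystal graph `G_n`. -/
def SameComp (n : ℕ) : List ℕ → List ℕ → Prop := Relation.EqvGen (CrystalStep n)

/-- One crystal edge of color `i ∈ {1,...,n−1}` (the `U_q(sl_n)` structure). -/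
def CrystalStepA (n : ℕ) (w w' : List ℕ) : Prop :=
  ∃ i, 1 ≤ i ∧ i + 1 ≤ n ∧ (fOp n i w = some w' ∨ eOp n i w = some w')

/-- Same `U_q(sl_n)`-connected component (arrows of color `n` removed). -/
def SameCompA (n : ℕ) : List ℕ → List ℕ → Prop := Relation.EqvGen (CrystalStepA n)

/-- Highest weight vertex: `ẽ_i(w) = 0` for all `i = 1,...,n`. -/
def HighestWt (n : ℕ) (w : List ℕ) : Prop := ∀ i, 1 ≤ i → i ≤ n → eOp n i w = none

/-- The weight `d(w)`: `d_i = #(i in w) − #(ī in w)`. -/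
def wt (n : ℕ) (w : List ℕ) (i : ℕ) : ℤ := (w.count i : ℤ) - (w.count (2*n+1-i) : ℤ)

/-- Apply the sequence of operators `f̃_{i}` for `i ∈ l` successively. -/
def applyF (n : ℕ) (l : List ℕ) (w : List ℕ) : Option (List ℕ) :=
  l.foldl (fun ow i => ow.bind (fOp n i)) (some w)

/-- `w1 ∼ w2`: same place in two isomorphic connected components of `G_n`. -/
def SamePlace (n : ℕ) (w1 w2 : List ℕ) : Prop :=
  ∃ w10 w20 l, HighestWt n w10 ∧ HighestWt n w20 ∧
    (∀ i, 1 ≤ i → i ≤ n → wt n w10 i = wt n w20 i) ∧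
    (∀ i ∈ l, 1 ≤ i ∧ i ≤ n) ∧
    applyF n l w10 = some w1 ∧ applyF n l w20 = some w2

/-! ### The plactic relations. -/

/-- The relations `R1` and `R2` (on bare length-3 words). -/
inductive KnuthRel (n : ℕ) : List ℕ → List ℕ → Prop
  | R1a (x y z : ℕ) : 1 ≤ x → x ≤ y → y < z → z ≤ 2*n → z ≠ 2*n+1-x →
      KnuthRel n [y,z,x] [y,x,z]
  | R1b (x y z : ℕ) : 1 ≤ x → x < y → y ≤ z → z ≤ 2*n → z ≠ 2*n+1-x →
      KnuthRel n [x,z,y] [z,x,y]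
  | R2a (x y : ℕ) : 1 < x → x ≤ n → x ≤ y → y ≤ 2*n+1-x →
      KnuthRel n [y, 2*n+2-x, x-1] [y, x, 2*n+1-x]
  | R2b (x y : ℕ) : 1 < x → x ≤ n → x ≤ y → y ≤ 2*n+1-x →
      KnuthRel n [x, 2*n+1-x, y] [2*n+2-x, x-1, y]

/-- One rewriting step, in context, by `R1`, `R2` or the contraction `R3`. -/
inductive PlStep (n : ℕ) : List ℕ → List ℕ → Prop
  | knuth (u v w w' : List ℕ) : KnuthRel n w w' → PlStep n (u++w++v) (u++w'++v)
  | contr (u v w : List ℕ) : MinimalNonAdm n w → PlStep n (u++w++v) (u++(contract n w)++v)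

/-- The plactic congruence of `Pl(C_n)`. -/
def Plactic (n : ℕ) : List ℕ → List ℕ → Prop := Relation.EqvGen (PlStep n)

/-- One rewriting step in context using only `R1` and `R2`. -/
inductive Pl12Step (n : ℕ) : List ℕ → List ℕ → Prop
  | knuth (u v w w' : List ℕ) : KnuthRel n w w' → Pl12Step n (u++w++v) (u++w'++v)

/-- The congruence generated by `R1` and `R2` only. -/
def Plactic12 (n : ℕ) : List ℕ → List ℕ → Prop := Relation.EqvGen (Pl12Step n)

/-- Relation on `Option`s: `none ↔ none`, `some ↔ some` related values. -/
def OptRel (r : List ℕ → List ℕ → Prop) : Option (List ℕ) → Option (List ℕ) → Prop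
  | none, none => True
  | some a, some b => r a b
  | _, _ => False

/-! ### Symplectic tableaux. -/

/-- `C ≤ D` for columns with `h(C) ≥ h(D)`: rows of `CD` weakly increasing. -/
def ColLe (C D : List ℕ) : Prop :=
  D.length ≤ C.length ∧ ∀ k < D.length, C.getD k 0 ≤ D.getD k 0

/-- A symplectic tableau: a list of admissible columns, left to right, with
`rC_i ≤ lC_{i+1}` (Sheats' description of the KN conditions). -/
def IsSympTab (n : ℕ) (T : List (List ℕ)) : Prop :=
  (∀ C ∈ T, IsColumn n C ∧ KNAdmissible n C) ∧
  T.Chain' (fun C D => ColLe (rC n C) (lC n D))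

/-- The reading of a tableau: columns from right to left, top to bottom. -/
def reading (T : List (List ℕ)) : List ℕ := T.reverse.foldr (· ++ ·) []

/-- Number of boxes in row `k` (0-based) of the shape of `T`. -/
def rowLenF (T : List (List ℕ)) (k : ℕ) : ℕ :=
  (T.filter (fun C => decide (k < C.length))).length

/-- `g` is obtained from `f` by adding exactly one box (in some row). -/
def AddOneBox (f g : ℕ → ℕ) : Prop := ∃ j, g j = f j + 1 ∧ ∀ k, k ≠ j → g k = f k

/-- Two diagrams differ by exactly one box. -/
def DiffOneBox (f g : ℕ → ℕ) : Prop := AddOneBox f g ∨ AddOneBox g f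

/-- An `n`-oscillating tableau of length `l` (diagrams as row-length functions,
normalized to `0` outside `{1,...,l}`). -/
def IsOscTab (n l : ℕ) (Q : ℕ → ℕ → ℕ) : Prop :=
  (∀ k, Q 0 k = 0) ∧ (∀ i, l < i → ∀ k, Q i k = 0) ∧
  (∀ i < l, DiffOneBox (Q i) (Q (i+1))) ∧
  (∀ i k, Q i (k+1) ≤ Q i k) ∧
  (∀ i k, n ≤ k → Q i k = 0)

/-! Let `z` be the largest letter `≤ m` with `(z, z̄)` in `C`, or `0` if there is none. Sending
each letter to its unbarred letter is injective on the entries counted by `N(m)` but not by `N(z)`,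
since two entries with the same image `k` form a pair `(k, k̄)`; their images lie in `(z, m]`, so
`N(m) ≤ N(z) + (m - z)`. As `N(0) = 0 < N(m) - m`, the letter `z` exists and `N(z) > z`. -/

open scoped Finset

def unbar (n x : ℕ) : ℕ := if x ≤ n then x else 2*n+1-x

lemma unbar_le_iff {n m x : ℕ} (hmn : m ≤ n) (hx : x ≤ 2*n) :
    unbar n x ≤ m ↔ x ≤ m ∨ 2*n+1-m ≤ x := by
  unfold unbar
  split_ifs <;> omega

lemma IsColumn.nodup {n : ℕ} {C : List ℕ} (hC : IsColumn n C) : C.Nodup :=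
  (List.isChain_iff_pairwise.mp hC.1).imp Nat.ne_of_lt

lemma Ncount_zero {n : ℕ} {C : List ℕ} (hC : IsColumn n C) : Ncount n 0 C = 0 := by
  simp only [Ncount, List.length_eq_zero_iff, List.filter_eq_nil_iff, decide_eq_true_eq]
  intro x hx
  have := hC.2 x hx
  omega

lemma Ncount_eq_card_filter_unbar_le {n m : ℕ} {C : List ℕ} (hmn : m ≤ n) (hC : IsColumn n C) :
    Ncount n m C = #{x ∈ C.toFinset | unbar n x ≤ m} := by
  rw [Ncount, ← List.toFinset_card_of_nodup (hC.nodup.filter _), List.toFinset_filter]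
  congr 1
  refine Finset.filter_congr fun x hx => ?_
  rw [decide_eq_true_eq, unbar_le_iff hmn (hC.2 x (List.mem_toFinset.mp hx)).2]

lemma Ncount_le_Ncount_add {n z m : ℕ} {C : List ℕ} (hC : IsColumn n C) (hzm : z ≤ m)
    (hmn : m ≤ n) (hpair : ∀ k, z < k → k ≤ m → k ∈ C → 2*n+1-k ∉ C) :
    Ncount n m C ≤ Ncount n z C + (m - z) := by
  rw [Ncount_eq_card_filter_unbar_le hmn hC, Ncount_eq_card_filter_unbar_le (hzm.trans hmn) hC,
    ← Finset.card_filter_add_card_filter_not (fun x => unbar n x ≤ z), Finset.filter_filter,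
    Finset.filter_filter]
  have hlow : ∀ x, unbar n x ≤ m ∧ unbar n x ≤ z ↔ unbar n x ≤ z := fun x => by omega
  simp only [hlow]
  gcongr
  calc #{x ∈ C.toFinset | unbar n x ≤ m ∧ ¬unbar n x ≤ z}
      ≤ #(Finset.Ioc z m) := by
        refine Finset.card_le_card_of_injOn (unbar n) (fun x hx => ?_) fun x hx y hy hxy => ?_
        · simp only [Finset.coe_filter, Set.mem_ofPred_eq] at hx
          simp only [Finset.coe_Ioc, Set.mem_Ioc]
          omega
        · simp only [Finset.coe_filter, List.mem_toFinset, Set.mem_ofPred_eq] at hx hy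
          have hx2 := (hC.2 x hx.1).2
          have hy2 := (hC.2 y hy.1).2
          unfold unbar at hxy hx hy
          split_ifs at hxy hx hy with h1 h2 h2
          · exact hxy
          · exact absurd (show 2*n+1-x = y by omega ▸ hy.1) (hpair x (by omega) (by omega) hx.1)
          · exact absurd (show 2*n+1-y = x by omega ▸ hx.1) (hpair y (by omega) (by omega) hy.1)
          · omega
    _ = m - z := Nat.card_Ioc z m

theorem stmt2_general (n : ℕ) (C : List ℕ) (hC : IsColumn n C)
    (m : ℕ) (hmn : m ≤ n)
    (hN : m < Ncount n m C) :
    ∃ z, 1 ≤ z ∧ z ≤ n ∧ z ∈ C ∧ (2*n+1-z) ∈ C ∧ z < Ncount n z C := by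
  set z := Nat.findGreatest (fun k => k ∈ C ∧ 2*n+1-k ∈ C) m
  have hzm : z ≤ m := Nat.findGreatest_le m
  have hle : Ncount n m C ≤ Ncount n z C + (m - z) :=
    Ncount_le_Ncount_add hC hzm hmn fun k hzk hkm hk hk' =>
      Nat.findGreatest_is_greatest hzk hkm ⟨hk, hk'⟩
  have hz0 : z ≠ 0 := by
    intro h
    rw [h, Ncount_zero hC] at hle
    omega
  obtain ⟨hzC, hzC'⟩ := Nat.findGreatest_of_ne_zero rfl hz0
  exact ⟨z, Nat.one_le_iff_ne_zero.mpr hz0, hzm.trans hmn, hzC, hzC', by omega⟩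

/-- if `C` contains a letter `m` or `m̄` with `N(m) > m`, then `C`
contains a pair `(z, z̄)` with `N(z) > z`. -/
theorem stmt2 (n : ℕ) (hn : 1 ≤ n) (C : List ℕ) (hC : IsColumn n C)
    (m : ℕ) (hm1 : 1 ≤ m) (hmn : m ≤ n) (hmem : m ∈ C ∨ (2*n+1-m) ∈ C)
    (hN : m < Ncount n m C) :
    ∃ z, 1 ≤ z ∧ z ≤ n ∧ z ∈ C ∧ (2*n+1-z) ∈ C ∧ z < Ncount n z C :=
  stmt2_general n C hC m hmn hN
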